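/- Let a > 0, b ∈ ℝ, n ≥ 1, and x ∈ ℝ. If F_{a,b}'(F_{a,b}^k(x)) > 0 for every k = 0, 1, …, n−1 (i.e., every point of the orbit segment lies in a lap where the map is increasing), then the derivative of the n-th iterate satisfies 0 < (F_{a,b}^n)'(x) < 1. In particular, along any periodic orbit contained entirely in the increasing laps, the multiplier of the orbit is strictly between 0 and 1, so the orbit is attracting. -/

import Mathlib

open Finset

/- By the chain rule, `(F^n)'(x)` is the product of the derivatives `F'(F^k x)`, `k < n`.
Each factor is positive by hypothesis and below `1` because
`F'(y) = 1 - a e^{-ay} / (e^{-ay} + 1)^2` with `a > 0`; a nonempty product of numbers in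
`(0, 1)` lies in `(0, 1)`. -/

noncomputable def eosMap (a b x : ℝ) : ℝ := x + b - 1 / (Real.exp (-(a * x)) + 1)

theorem Finset.prod_mem_Ioo_zero_one {ι R : Type*} [CommSemiring R] [PartialOrder R]
    [IsStrictOrderedRing R] {s : Finset ι} {g : ι → R} (hs : s.Nonempty)
    (hg : ∀ i ∈ s, g i ∈ Set.Ioo 0 1) : ∏ i ∈ s, g i ∈ Set.Ioo 0 1 := by
  classical
  obtain ⟨j, hj⟩ := hs
  have hrest : ∏ i ∈ s.erase j, g i ≤ 1 :=
    prod_le_one (fun i hi => (hg i (mem_of_mem_erase hi)).1.le)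
      (fun i hi => (hg i (mem_of_mem_erase hi)).2.le)
  refine ⟨prod_pos fun i hi => (hg i hi).1, ?_⟩
  rw [← mul_prod_erase s g hj]
  exact mul_lt_one_of_nonneg_of_lt_one_left (hg j hj).1.le (hg j hj).2 hrest

theorem hasDerivAt_iterate_prod {𝕜 : Type*} [NontriviallyNormedField 𝕜] {f : 𝕜 → 𝕜} {x : 𝕜}
    {n : ℕ} (hf : ∀ k < n, DifferentiableAt 𝕜 f (f^[k] x)) :
    HasDerivAt f^[n] (∏ k ∈ range n, deriv f (f^[k] x)) x := by
  induction n with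
  | zero => simpa using hasDerivAt_id x
  | succ n ih =>
    rw [Function.iterate_succ', prod_range_succ, mul_comm]
    exact (hf n n.lt_succ_self).hasDerivAt.comp x
      (ih fun k hk => hf k (hk.trans n.lt_succ_self))

theorem hasDerivAt_eosMap (a b x : ℝ) :
    HasDerivAt (eosMap a b) (1 - a * Real.exp (-(a * x)) / (Real.exp (-(a * x)) + 1) ^ 2) x := by
  have hexp : HasDerivAt (fun y => Real.exp (-(a * y)) + 1) (Real.exp (-(a * x)) * -a) x := by
    simpa using (((hasDerivAt_id x).const_mul a).neg.exp).add_const 1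
  have hfun : eosMap a b = fun y => y + b - (Real.exp (-(a * y)) + 1)⁻¹ := by
    funext y; simp [eosMap, one_div]
  rw [hfun]
  refine (((hasDerivAt_id' x).add_const b).fun_sub (hexp.fun_inv (by positivity))).congr_deriv ?_
  ring

theorem differentiable_eosMap (a b : ℝ) : Differentiable ℝ (eosMap a b) :=
  fun x => (hasDerivAt_eosMap a b x).differentiableAt

theorem deriv_eosMap_lt_one {a : ℝ} (ha : 0 < a) (b x : ℝ) : deriv (eosMap a b) x < 1 := by
  rw [(hasDerivAt_eosMap a b x).deriv]
  have : 0 < a * Real.exp (-(a * x)) / (Real.exp (-(a * x)) + 1) ^ 2 := by positivity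
  linarith

/-- Let `a > 0`, `b ∈ ℝ`, `n ≥ 1` and `x ∈ ℝ`. If `F_{a,b}'(F_{a,b}^k(x)) > 0` for every
`k = 0, 1, …, n-1`, then the derivative of the `n`-th iterate satisfies
`0 < (F_{a,b}^n)'(x) < 1`. -/
theorem eosMap_iterate_deriv_lt_one (a b : ℝ) (ha : 0 < a) (n : ℕ) (hn : 1 ≤ n) (x : ℝ)
    (hpos : ∀ k, k < n → 0 < deriv (eosMap a b) ((eosMap a b)^[k] x)) :
    0 < deriv ((eosMap a b)^[n]) x ∧ deriv ((eosMap a b)^[n]) x < 1 := by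
  rw [(hasDerivAt_iterate_prod fun k _ => differentiable_eosMap a b _).deriv]
  exact prod_mem_Ioo_zero_one (nonempty_range_iff.2 (by omega))
    fun k hk => ⟨hpos k (mem_range.1 hk), deriv_eosMap_lt_one ha b _⟩
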